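/- Let Z̃_i := H_i H_{i+1} ⋯ H_{n−1} Φ H_1 H_2 ⋯ H_{i−1} for 1 ≤ i ≤ n. Then for every rational function f in z_1,…,z_n over F one has Z̃_i f(z) = Σ_{I ⊆ {1,…,n}, i ∈ I} r_I^{(i)}(z) f(Iz), the sum being over all subsets I of {1,…,n} containing i. -/

import Mathlib

open scoped BigOperators Classical

noncomputable section

/-- The ground field `F = ℚ(q,t)`. -/
abbrev F : Type := FractionRing (MvPolynomial (Fin 2) ℚ)

/-- The indeterminate `q` of `F = ℚ(q,t)`. -/
def q : F := algebraMap (MvPolynomial (Fin 2) ℚ) F (MvPolynomial.X 0)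

/-- The indeterminate `t` of `F = ℚ(q,t)`. -/
def t : F := algebraMap (MvPolynomial (Fin 2) ℚ) F (MvPolynomial.X 1)

/-- A composition with (at most) `n` parts: nonzero entries only in positions `1,…,n`. -/
def IsComp (n : ℕ) (η : ℕ → ℕ) : Prop := ∀ j, η j ≠ 0 → j ∈ Finset.Icc 1 n

/-- The modulus `|η| = η_1 + ⋯ + η_n`. -/
def wt (n : ℕ) (η : ℕ → ℕ) : ℕ := ∑ j ∈ Finset.Icc 1 n, η j

/-- `l'_η(i) = #{j<i : η_j ≥ η_i} + #{j>i : η_j > η_i}`. -/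
def lprime (n : ℕ) (η : ℕ → ℕ) (i : ℕ) : ℕ :=
  ((Finset.Icc 1 n).filter fun j => j < i ∧ η i ≤ η j).card +
  ((Finset.Icc 1 n).filter fun j => i < j ∧ η i < η j).card

/-- The spectral vector `η̄` with parameters `qp, tp`: `η̄_i = qp^(η_i) tp^(-l'_η(i))`. -/
def spec (qp tp : F) (n : ℕ) (η : ℕ → ℕ) : ℕ → F := fun i =>
  qp ^ (η i) * tp ^ (-(lprime n η i : ℤ))

/-- The finitely supported function obtained from `η` by truncating outside `[1,n]`. -/
def truncFinsupp (n : ℕ) (η : ℕ → ℕ) : ℕ →₀ ℕ :=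
  Finsupp.onFinset (Finset.Icc 1 n) (fun j => if j ∈ Finset.Icc 1 n then η j else 0)
    (fun a ha => by by_contra h; simp [h] at ha)

/-- The point obtained from `z` by exchanging coordinates `i` and `j`. -/
def swapPt (i j : ℕ) (z : ℕ → F) : ℕ → F :=
  fun k => if k = i then z j else if k = j then z i else z k

/-- The transposition operator `s_i`. -/
def sOp (i : ℕ) (f : (ℕ → F) → F) : (ℕ → F) → F := fun z => f (swapPt i (i+1) z)

/-- The Hecke operator `H_i` (with Hecke parameter `tp`). -/
def HOp (tp : F) (i : ℕ) (f : (ℕ → F) → F) : (ℕ → F) → F := fun z =>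
  (tp - 1) * z i / (z i - z (i+1)) * f z +
    (z i - tp * z (i+1)) / (z i - z (i+1)) * f (swapPt i (i+1) z)

/-- The point `(z_n/q, z_1, …, z_{n-1})` (coordinates outside `[1,n]` unchanged). -/
def deltaPt (qp : F) (n : ℕ) (z : ℕ → F) : ℕ → F := fun k =>
  if k = 1 then z n / qp else if k ≤ n then z (k-1) else z k

/-- The operator `Φ = (z_n - t^{-n+1})·Δ`. -/
def PhiOp (qp tp : F) (n : ℕ) (f : (ℕ → F) → F) : (ℕ → F) → F := fun z =>
  (z n - tp ^ (1 - (n:ℤ))) * f (deltaPt qp n z)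

/-- The operator product `H_a H_{a+1} ⋯ H_b` (the identity when `a > b`). -/
def Hprod (tp : F) (a b : ℕ) (f : (ℕ → F) → F) : (ℕ → F) → F :=
  (List.range' a (b + 1 - a)).foldr (fun j g => HOp tp j g) f

/-- The operator `Z̃_i = H_i ⋯ H_{n-1} Φ H_1 ⋯ H_{i-1}`. -/
def Ztilde (qp tp : F) (n i : ℕ) (f : (ℕ → F) → F) : (ℕ → F) → F :=
  Hprod tp i (n-1) (PhiOp qp tp n (Hprod tp 1 (i-1) f))

/-- The Cherednik operator `Ξ_i = z_i⁻¹ + z_i⁻¹ H_i ⋯ H_{n-1} Φ H_1 ⋯ H_{i-1}`. -/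
def XiOp (qp tp : F) (n i : ℕ) (f : (ℕ → F) → F) : (ℕ → F) → F := fun z =>
  (z i)⁻¹ * f z + (z i)⁻¹ * Ztilde qp tp n i f z

/-- The operator product `Ξ_1 ⋯ Ξ̂_i ⋯ Ξ_n` (with `Ξ_i` omitted). -/
def XiProdOmit (qp tp : F) (n i : ℕ) (f : (ℕ → F) → F) : (ℕ → F) → F :=
  ((List.range' 1 n).filter (fun j => j ≠ i)).foldr (fun j g => XiOp qp tp n j g) f

/-- The operator `Z_i = t^{-binom(n,2)} (z_i Ξ_i - 1) Ξ_1 ⋯ Ξ̂_i ⋯ Ξ_n`. -/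
def ZOp (qp tp : F) (n i : ℕ) (f : (ℕ → F) → F) : (ℕ → F) → F := fun z =>
  tp ^ (-((n * (n-1) / 2 : ℕ) : ℤ)) *
    (z i * XiOp qp tp n i (XiProdOmit qp tp n i f) z - XiProdOmit qp tp n i f z)

/-- A `qp`-generic point: the quantities `z_i qp^a` (for `1 ≤ i ≤ n`, `a ∈ ℕ`) are
pairwise distinct.  All the rational operations occurring in the operators above are
defined at such points. -/
def Generic (qp : F) (n : ℕ) (z : ℕ → F) : Prop :=
  ∀ i ∈ Finset.Icc 1 n, ∀ j ∈ Finset.Icc 1 n, ∀ a b : ℕ,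
    (i ≠ j ∨ a ≠ b) → z i * qp ^ a ≠ z j * qp ^ b

/-- The Demazure-Lusztig operator `T_i`. -/
def TOp (tp : F) (i : ℕ) (f : (ℕ → F) → F) : (ℕ → F) → F := fun z =>
  tp * f z + (tp * z i - z (i+1)) / (z i - z (i+1)) * (f (swapPt i (i+1) z) - f z)

/-- The inverse Demazure-Lusztig operator `T_i⁻¹ = t⁻¹ - 1 + t⁻¹ T_i`. -/
def TinvOp (tp : F) (i : ℕ) (f : (ℕ → F) → F) : (ℕ → F) → F := fun z =>
  (tp⁻¹ - 1) * f z + tp⁻¹ * TOp tp i f z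

/-- The point obtained from `z` by the `q`-shift `z_1 ↦ q z_1`. -/
def tauPt (qp : F) (z : ℕ → F) : ℕ → F := fun k => if k = 1 then qp * z 1 else z k

/-- The operator `ω = s_{n-1} ⋯ s_1 τ_1`. -/
def omegaOp (qp : F) (n : ℕ) (f : (ℕ → F) → F) : (ℕ → F) → F :=
  (List.range' 1 (n-1)).foldl (fun g j => sOp j g) (fun z => f (tauPt qp z))

/-- The operator product `T_a T_{a+1} ⋯ T_b` (identity when `a > b`). -/
def Tprod (tp : F) (a b : ℕ) (f : (ℕ → F) → F) : (ℕ → F) → F :=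
  (List.range' a (b + 1 - a)).foldr (fun j g => TOp tp j g) f

/-- The operator product `T_a⁻¹ T_{a+1}⁻¹ ⋯ T_b⁻¹` (identity when `a > b`). -/
def TinvProd (tp : F) (a b : ℕ) (f : (ℕ → F) → F) : (ℕ → F) → F :=
  (List.range' a (b + 1 - a)).foldr (fun j g => TinvOp tp j g) f

/-- The Cherednik operator `Y_i = t^{-n+1} T_i ⋯ T_{n-1} ω T_1⁻¹ ⋯ T_{i-1}⁻¹`. -/
def YOp (qp tp : F) (n i : ℕ) (f : (ℕ → F) → F) : (ℕ → F) → F := fun z =>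
  tp ^ (1 - (n:ℤ)) * Tprod tp i (n-1) (omegaOp qp n (TinvProd tp 1 (i-1) f)) z

/-- Strict dominance order on compositions (restricted to the window `[1,n]`). -/
def domlt (n : ℕ) (μ η : ℕ → ℕ) : Prop :=
  (∃ i ∈ Finset.Icc 1 n, μ i ≠ η i) ∧
    ∀ p ∈ Finset.Icc 1 n, ∑ i ∈ Finset.Icc 1 p, μ i ≤ ∑ i ∈ Finset.Icc 1 p, η i

/-- `sortDesc n μ` is `μ⁺`, the decreasing rearrangement of `(μ_1,…,μ_n)` (1-based). -/
def sortDesc (n : ℕ) (μ : ℕ → ℕ) : ℕ → ℕ := fun i =>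
  ((((Finset.Icc 1 n).val.map μ).sort (· ≤ ·)).reverse).getD (i - 1) 0

/-- The partial order `≺` on compositions: `μ ≺ η` iff `μ⁺ < η⁺`, or `μ⁺ = η⁺` and `μ < η`. -/
def precOrd (n : ℕ) (μ η : ℕ → ℕ) : Prop :=
  domlt n (sortDesc n μ) (sortDesc n η) ∨
    ((∀ i ∈ Finset.Icc 1 n, sortDesc n μ i = sortDesc n η i) ∧ domlt n μ η)

/-- `P` is the nonsymmetric Macdonald polynomial `E_η(z; qp, tp)`:
it is of the monic triangular form `z^η + Σ_{ν ≺ η} b_{ην} z^ν` and satisfies the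
eigenvalue equations `Y_i P = η̄_i P` (stated at generic points). -/
def IsNSMac (qp tp : F) (n : ℕ) (η : ℕ → ℕ) (P : MvPolynomial ℕ F) : Prop :=
  P.coeff (truncFinsupp n η) = 1 ∧
  (∀ ν : ℕ →₀ ℕ, P.coeff ν ≠ 0 → ν = truncFinsupp n η ∨
    (IsComp n (fun j => ν j) ∧ wt n (fun j => ν j) = wt n η ∧ precOrd n (fun j => ν j) η)) ∧
  (∀ i ∈ Finset.Icc 1 n, ∀ z : ℕ → F, Generic qp n z →
    YOp qp tp n i (fun w => MvPolynomial.eval w P) z = spec qp tp n η i * MvPolynomial.eval z P)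

/-- `P` is the nonsymmetric interpolation Macdonald polynomial `E*_η(z;q,t)`:
a polynomial in `z_1,…,z_n` of total degree `≤ |η|`, with coefficient `1` on `z^η`,
vanishing at the spectral vectors `μ̄` of all compositions `μ ≠ η` with `|μ| ≤ |η|`. -/
def IsInterp (n : ℕ) (η : ℕ → ℕ) (P : MvPolynomial ℕ F) : Prop :=
  P.totalDegree ≤ wt n η ∧
  P.coeff (truncFinsupp n η) = 1 ∧
  (∀ ν : ℕ →₀ ℕ, P.coeff ν ≠ 0 → IsComp n (fun j => ν j)) ∧
  ∀ μ : ℕ → ℕ, IsComp n μ → wt n μ ≤ wt n η → truncFinsupp n μ ≠ truncFinsupp n η →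
    MvPolynomial.eval (spec q t n μ) P = 0

/-- The least element `t_1` of a finite set `I`. -/
def fmin (I : Finset ℕ) : ℕ := if h : I.Nonempty then I.min' h else 0

/-- The greatest element `t_s` of a finite set `I`. -/
def fmax (I : Finset ℕ) : ℕ := if h : I.Nonempty then I.max' h else 0

/-- The least element of `I` greater than `j`. -/
def succI (I : Finset ℕ) (j : ℕ) : ℕ := fmin (I.filter (fun k => j < k))

/-- The greatest element of `I` smaller than `j`. -/
def predI (I : Finset ℕ) (j : ℕ) : ℕ := fmax (I.filter (fun k => k < j))

/-- `â(x,y) = (t-1)x/(x-y)`. -/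
def ahat (tp x y : F) : F := (tp - 1) * x / (x - y)

/-- `b̂(x,y) = (x-ty)/(x-y)`. -/
def bhat (tp x y : F) : F := (x - tp * y) / (x - y)

/-- `A_I(z) = â(z_{t_s}/q, z_{t_1}) ∏_{u=1}^{s-1} â(z_{t_u}, z_{t_{u+1}})`. -/
def AI (qp tp : F) (I : Finset ℕ) (z : ℕ → F) : F :=
  ahat tp (z (fmax I) / qp) (z (fmin I)) *
    (((I.sort (· ≤ ·)).zip (I.sort (· ≤ ·)).tail).map (fun p => ahat tp (z p.1) (z p.2))).prod

/-- `B_I(z)`. -/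
def BI (qp tp : F) (n : ℕ) (I : Finset ℕ) (z : ℕ → F) : F :=
  (z (fmax I) - tp ^ (1 - (n:ℤ))) *
    (∏ j ∈ (Finset.Icc 1 n).filter (fun j => j < fmin I), bhat tp (z (fmax I) / qp) (z j)) *
    (∏ j ∈ (Finset.Icc 1 n).filter (fun j => j ∉ I ∧ fmin I < j), bhat tp (z (predI I j)) (z j))

/-- `χ_I^{(i)}(z)`. -/
def chiI (qp tp : F) (I : Finset ℕ) (i : ℕ) (z : ℕ → F) : F :=
  if i = fmin I then (ahat tp (z (fmax I) / qp) (z i))⁻¹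
  else (ahat tp (z (predI I i)) (z i))⁻¹

/-- `r_I^{(i)}(z) = χ_I^{(i)}(z) A_I(z) B_I(z)`. -/
def rI (qp tp : F) (n : ℕ) (I : Finset ℕ) (i : ℕ) (z : ℕ → F) : F :=
  chiI qp tp I i z * AI qp tp I z * BI qp tp n I z

/-- The point `Iz`. -/
def Ipt (qp : F) (I : Finset ℕ) (z : ℕ → F) : ℕ → F := fun j =>
  if j = fmin I then z (fmax I) / qp
  else if j ∈ I then z (predI I j)
  else z j

/-- `B̃_I(z)`. -/
def BtildeI (qp tp : F) (n : ℕ) (I : Finset ℕ) (z : ℕ → F) : F :=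
  (qp * z (fmin I) - tp ^ (1 - (n:ℤ))) *
    (∏ j ∈ (Finset.Icc 1 n).filter (fun j => j ∉ I ∧ j < fmax I), bhat tp (z (succI I j)) (z j)) *
    (∏ j ∈ (Finset.Icc 1 n).filter (fun j => fmax I < j), bhat tp (qp * z (fmin I)) (z j))

/-- `χ̃_I^{(i)}(z)`. -/
def chitildeI (qp tp : F) (I : Finset ℕ) (i : ℕ) (z : ℕ → F) : F :=
  if i = fmax I then z i / ahat tp (z i) (qp * z (fmin I))
  else z i / ahat tp (z i) (z (succI I i))

/-- The composition `c_I(η)`. -/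
def cIfun (I : Finset ℕ) (η : ℕ → ℕ) : ℕ → ℕ := fun j =>
  if j = fmax I then η (fmin I) + 1
  else if j ∈ I then η (succI I j)
  else η j

/-- `I` is maximal with respect to `η`. -/
def MaximalI (n : ℕ) (I : Finset ℕ) (η : ℕ → ℕ) : Prop :=
  (∀ j ∈ Finset.Icc 1 n, j ∉ I → j < fmax I → η j ≠ η (succI I j)) ∧
  (∀ j ∈ Finset.Icc 1 n, fmax I < j → η j ≠ η (fmin I) + 1)

/-- `I` is comaximal with respect to `lam`. -/
def CoMaximalI (n : ℕ) (I : Finset ℕ) (lam : ℕ → ℕ) : Prop :=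
  (∀ j ∈ Finset.Icc 1 n, j ∉ I → fmin I < j → lam j ≠ lam (predI I j)) ∧
  (∀ j ∈ Finset.Icc 1 n, j < fmin I → lam j ≠ lam (fmax I) - 1) ∧
  lam (fmax I) ≠ 0

/-- `J^I_η`: the collection of nonempty subsets of `{1,…,n}` maximal with respect to `η`. -/
def Jset (n : ℕ) (η : ℕ → ℕ) : Finset (Finset ℕ) :=
  (Finset.Icc 1 n).powerset.filter (fun I => I.Nonempty ∧ MaximalI n I η)

/-- The arm length `a_η(i,j) = η_i - j`. -/
def armF (η : ℕ → ℕ) (i j : ℕ) : ℕ := η i - j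

/-- The leg length `l_η(i,j)`. -/
def legF (n : ℕ) (η : ℕ → ℕ) (i j : ℕ) : ℕ :=
  ((Finset.Icc 1 n).filter fun k => i < k ∧ j ≤ η k ∧ η k ≤ η i).card +
  ((Finset.Icc 1 n).filter fun k => k < i ∧ j ≤ η k + 1 ∧ η k + 1 ≤ η i).card

/-- `d'_η(qp,tp) = ∏_{s ∈ diag(η)} (1 - qp^{a_η(s)+1} tp^{l_η(s)})`. -/
def dprime (qp tp : F) (n : ℕ) (η : ℕ → ℕ) : F :=
  ∏ i ∈ Finset.Icc 1 n, ∏ j ∈ Finset.Icc 1 (η i),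
    (1 - qp ^ (armF η i j + 1) * tp ^ (legF n η i j))

/-- `k_η = (∏_i η̄_i^{η_i}) d'_η(q⁻¹,t⁻¹)`. -/
def kconst (n : ℕ) (η : ℕ → ℕ) : F :=
  (∏ i ∈ Finset.Icc 1 n, spec q t n η i ^ (η i)) * dprime q⁻¹ t⁻¹ n η

/-- The Pieri coefficient `a_{η,c_I(η)}`. -/
def acoef (n : ℕ) (η : ℕ → ℕ) (I : Finset ℕ) : F :=
  -((q - 1) * dprime q⁻¹ t⁻¹ n η * AI q t I (spec q t n η) * BtildeI q t n I (spec q t n η)) /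
    (q ^ (η (fmin I) + 1) * (t - 1) * dprime q⁻¹ t⁻¹ n (cIfun I η))

/-- The tuples `(v_1,…,v_n)` of nonnegative integers with `v_1 + ⋯ + v_n = m`. -/
def compTuples (n m : ℕ) : Finset (Fin n → ℕ) :=
  (Fintype.piFinset fun _ => Finset.range (m + 1)).filter (fun v => ∑ i, v i = m)

/-- The (1-based) composition associated with a tuple `v : Fin n → ℕ`. -/
def ofFin (n : ℕ) (v : Fin n → ℕ) : ℕ → ℕ := fun j =>
  if h : 1 ≤ j ∧ j - 1 < n then v ⟨j - 1, h.2⟩ else 0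

/-!
Each `H_j` is the sum of a multiple of the identity and a multiple of `s_j`, so expanding the
`n - 1` factors of `Z̃_i` gives `2^(n-1)` terms. In each term follow the entry `z_i`: it is carried
to the right through `H_i ⋯ H_{n-1}`, moved to position `1` (and divided by `q`) by `Φ`, and
carried through `H_1 ⋯ H_{i-1}` back towards position `i`; at every identity term it is dropped
and the next entry is picked up. Together with `i`, the positions where entries are dropped form
the set `I`, the evaluation point is `Iz`, and the factor contributed at a position `j ≠ i` is
`â` (if `j ∈ I`) or `b̂` (if `j ∉ I`) evaluated at the cyclic predecessor of `z_j` in `I` and `z_j`.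
Besides these, `Φ` contributes `z_{t_s} - t^{1-n}`; the product of all of this together with the
factor at `i` itself is `A_I B_I`, and `χ_I^{(i)}` divides the factor at `i` out again.
-/

open Finset

section PredI

variable {I : Finset ℕ} {a j : ℕ}

lemma fmin_mem (hI : I.Nonempty) : fmin I ∈ I := by
  rw [fmin, dif_pos hI]; exact I.min'_mem hI

lemma fmax_mem (hI : I.Nonempty) : fmax I ∈ I := by
  rw [fmax, dif_pos hI]; exact I.max'_mem hI

lemma fmin_le (ha : a ∈ I) : fmin I ≤ a := by
  rw [fmin, dif_pos ⟨a, ha⟩]; exact I.min'_le a ha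

lemma le_fmax (ha : a ∈ I) : a ≤ fmax I := by
  rw [fmax, dif_pos ⟨a, ha⟩]; exact I.le_max' a ha

lemma predI_mem (h : ∃ x ∈ I, x < j) : predI I j ∈ I ∧ predI I j < j := by
  obtain ⟨x, hx, hxj⟩ := h
  exact mem_filter.1 (fmax_mem ⟨x, mem_filter.2 ⟨hx, hxj⟩⟩)

lemma le_predI (ha : a ∈ I) (haj : a < j) : a ≤ predI I j :=
  le_fmax (mem_filter.2 ⟨ha, haj⟩)

lemma predI_eq_of (ha : a ∈ I) (haj : a < j) (hmax : ∀ x ∈ I, x < j → x ≤ a) :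
    predI I j = a :=
  le_antisymm (hmax _ (predI_mem ⟨a, ha, haj⟩).1 (predI_mem ⟨a, ha, haj⟩).2) (le_predI ha haj)

lemma predI_insert_of_exists (ha : ∀ x ∈ I, a < x) (h : ∃ x ∈ I, x < j) :
    predI (insert a I) j = predI I j := by
  obtain ⟨hp, hpj⟩ := predI_mem h
  refine predI_eq_of (mem_insert_of_mem hp) hpj fun x hx hxj => ?_
  rcases mem_insert.1 hx with rfl | hx
  · exact (ha _ hp).le
  · exact le_predI hx hxj

lemma predI_insert_of_forall (h : ∀ x ∈ I, j ≤ x) (haj : a < j) : predI (insert a I) j = a := by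
  refine predI_eq_of (mem_insert_self a I) haj fun x hx hxj => ?_
  rcases mem_insert.1 hx with rfl | hx
  · rfl
  · exact absurd hxj (h x hx).not_gt

lemma fmin_insert_of_forall (ha : ∀ x ∈ I, a < x) : fmin (insert a I) = a := by
  rcases mem_insert.1 (fmin_mem (insert_nonempty a I)) with h | h
  · exact h
  · exact absurd (fmin_le (mem_insert_self a I)) (ha _ h).not_ge

end PredI

section HeckeChain

/-! Expanding `H_k ⋯ H_m g (w)` by choosing in each `H_j` either the identity term (`j ∈ K`)
or the transposition term: the entry at position `k` is carried to the right, swapped past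
`w (j+1)` when `j ∉ K` and left at position `j` when `j ∈ K`, after which `w (j+1)` is carried
on. `hCarry k K w j` is the entry carried when `H_j` is reached, `hPoint` the point at which `g`
is finally evaluated and `hCoeff` the product of the coefficients picked up. -/

def hCarry (k : ℕ) (K : Finset ℕ) (w : ℕ → F) (j : ℕ) : F :=
  if ∃ x ∈ K, x < j then w (predI K j + 1) else w k

def hPoint (k m : ℕ) (K : Finset ℕ) (w : ℕ → F) : ℕ → F := fun j =>
  if k ≤ j ∧ j ≤ m + 1 then (if j ∈ K ∨ j = m + 1 then hCarry k K w j else w (j + 1))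
  else w j

def hCoeff (tp : F) (k m : ℕ) (K : Finset ℕ) (w : ℕ → F) : F :=
  ∏ j ∈ Icc k m,
    if j ∈ K then ahat tp (hCarry k K w j) (w (j + 1)) else bhat tp (hCarry k K w j) (w (j + 1))

variable {tp : F} {k m j : ℕ} {K : Finset ℕ} (w : ℕ → F)

lemma swapPt_left (i j : ℕ) : swapPt i j w i = w j := by simp [swapPt]

lemma swapPt_right (i j : ℕ) : swapPt i j w j = w i := by
  unfold swapPt; split_ifs <;> simp_all

lemma swapPt_of_ne {i j x : ℕ} (hi : x ≠ i) (hj : x ≠ j) : swapPt i j w x = w x := by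
  simp [swapPt, hi, hj]

lemma hCarry_self (hK : ∀ x ∈ K, k ≤ x) : hCarry k K w k = w k := by
  rw [hCarry, if_neg]
  rintro ⟨x, hx, hxk⟩
  exact absurd (hK x hx) (by omega)

lemma hCarry_insert (hK : ∀ x ∈ K, k < x) (hj : k < j) :
    hCarry k (insert k K) w j = hCarry (k + 1) K w j := by
  rw [hCarry, if_pos ⟨k, mem_insert_self k K, hj⟩, hCarry]
  split_ifs with h
  · rw [predI_insert_of_exists hK h]
  · push Not at h
    rw [predI_insert_of_forall h hj]

lemma hCarry_swap (hK : ∀ x ∈ K, k < x) :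
    hCarry k K w j = hCarry (k + 1) K (swapPt k (k + 1) w) j := by
  unfold hCarry
  split_ifs with h
  · have := hK _ (predI_mem h).1
    rw [swapPt_of_ne w (by omega) (by omega)]
  · rw [swapPt_right]

lemma hPoint_insert (hK : ∀ x ∈ K, k < x) :
    hPoint k m (insert k K) w = hPoint (k + 1) m K w := by
  have hself : hCarry k (insert k K) w k = w k :=
    hCarry_self w (by simpa using fun x hx => (hK x hx).le)
  funext j
  unfold hPoint
  rcases lt_trichotomy j k with hj | rfl | hj
  · rw [if_neg (by omega), if_neg (by omega)]
  · split_ifs <;> first | omega | simp_all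
  · have hjK : j ∈ insert k K ↔ j ∈ K := by simp [hj.ne']
    simp only [hjK, hCarry_insert w hK hj, Nat.add_one_le_iff.2 hj, hj.le, true_and]

lemma hPoint_swap (hk : k ≤ m) (hK : ∀ x ∈ K, k < x) (hkK : k ∉ K) :
    hPoint k m K w = hPoint (k + 1) m K (swapPt k (k + 1) w) := by
  funext j
  unfold hPoint
  rcases lt_trichotomy j k with hj | rfl | hj
  · rw [if_neg (by omega), if_neg (by omega), swapPt_of_ne w hj.ne (by omega)]
  · rw [if_pos ⟨le_rfl, by omega⟩, if_neg (not_or.2 ⟨hkK, by omega⟩), if_neg (by omega),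
      swapPt_left]
  · simp only [← hCarry_swap w hK, Nat.add_one_le_iff.2 hj, hj.le, true_and]
    split_ifs
    · rfl
    · rw [swapPt_of_ne w (by omega) (by omega)]
    · rw [swapPt_of_ne w (by omega) (by omega)]

lemma hCoeff_insert (hk : k ≤ m) (hK : ∀ x ∈ K, k < x) :
    hCoeff tp k m (insert k K) w = ahat tp (w k) (w (k + 1)) * hCoeff tp (k + 1) m K w := by
  unfold hCoeff
  rw [← insert_Icc_add_one_left_eq_Icc hk, prod_insert (by simp),
    if_pos (mem_insert_self k K), hCarry_self w (by simpa using fun x hx => (hK x hx).le)]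
  congr 1
  refine prod_congr rfl fun j hj => ?_
  have hj : k < j := by simp at hj; omega
  simp only [mem_insert, hj.ne', false_or, hCarry_insert w hK hj]

lemma hCoeff_swap (hk : k ≤ m) (hK : ∀ x ∈ K, k < x) (hkK : k ∉ K) :
    hCoeff tp k m K w =
      bhat tp (w k) (w (k + 1)) * hCoeff tp (k + 1) m K (swapPt k (k + 1) w) := by
  unfold hCoeff
  rw [← insert_Icc_add_one_left_eq_Icc hk, prod_insert (by simp), if_neg hkK,
    hCarry_self w fun x hx => (hK x hx).le]
  congr 1
  refine prod_congr rfl fun j hj => ?_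
  have hj : k < j := by simp at hj; omega
  rw [← hCarry_swap w hK, swapPt_of_ne w (by omega) (by omega)]

lemma HOp_apply (g : (ℕ → F) → F) : HOp tp k g w =
    ahat tp (w k) (w (k + 1)) * g w + bhat tp (w k) (w (k + 1)) * g (swapPt k (k + 1) w) :=
  rfl

lemma Hprod_of_lt (h : m < k) (g : (ℕ → F) → F) : Hprod tp k m g = g := by
  simp [Hprod, (by omega : m + 1 - k = 0)]

lemma Hprod_of_le (h : k ≤ m) (g : (ℕ → F) → F) :
    Hprod tp k m g = HOp tp k (Hprod tp (k + 1) m g) := by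
  rw [Hprod, (by omega : m + 1 - k = (m + 1 - (k + 1)) + 1), List.range'_succ]
  rfl

theorem Hprod_eq_sum (g : (ℕ → F) → F) (w : ℕ → F) :
    Hprod tp k m g w = ∑ K ∈ (Icc k m).powerset, hCoeff tp k m K w * g (hPoint k m K w) := by
  induction h : m + 1 - k generalizing k w with
  | zero =>
    have hpt : hPoint k m ∅ w = w := by
      funext j
      unfold hPoint
      split_ifs with hj
      · simp [hCarry, (by omega : k = j)]
      · omega
      · rfl
    simp [Hprod_of_lt (by omega : m < k), hCoeff, Icc_eq_empty_of_lt (by omega : m < k), hpt]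
  | succ d ih =>
    have hk : k ≤ m := by omega
    rw [Hprod_of_le hk, HOp_apply, ih (k := k + 1) w (by omega), ih (k := k + 1) _ (by omega),
      mul_sum, mul_sum,
      ← insert_Icc_add_one_left_eq_Icc hk, sum_powerset_insert (by simp), add_comm]
    congr 1 <;> refine sum_congr rfl fun K hK => ?_ <;>
      have hKk : ∀ x ∈ K, k < x := fun x hx => by have := mem_Icc.1 (mem_powerset.1 hK hx); omega
    · have hkK : k ∉ K := fun h => (hKk k h).false
      rw [hCoeff_swap w hk hKk hkK, hPoint_swap w hk hKk hkK, mul_assoc]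
    · rw [hCoeff_insert w hk hKk, hPoint_insert w hKk, mul_assoc]

end HeckeChain

lemma prod_zip_sort_tail {M : Type*} [CommMonoid M] (g : ℕ → ℕ → M) (I : Finset ℕ) :
    (((I.sort (· ≤ ·)).zip (I.sort (· ≤ ·)).tail).map (fun p => g p.1 p.2)).prod =
      ∏ j ∈ I.erase (fmin I), g (predI I j) j := by
  induction I using Finset.induction_on_min with
  | empty => simp
  | insert a s ha ih =>
    have haS : a ∉ s := fun h => (ha a h).false
    rw [sort_insert _ (fun x hx => (ha x hx).le) haS, fmin_insert_of_forall ha,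
      erase_insert haS]
    rcases s.eq_empty_or_nonempty with rfl | hs
    · simp
    set b := fmin s
    have hb : ∀ x ∈ s.erase b, b < x := fun x hx =>
      lt_of_le_of_ne (fmin_le (mem_of_mem_erase hx)) (ne_of_mem_erase hx).symm
    have hsort : s.sort (· ≤ ·) = b :: (s.erase b).sort (· ≤ ·) := by
      conv_lhs => rw [← insert_erase (fmin_mem hs)]
      exact sort_insert _ (fun x hx => (hb x hx).le) (notMem_erase b s)
    have hpred_b : predI (insert a s) b = a :=
      predI_insert_of_forall (fun x hx => fmin_le hx) (ha b (fmin_mem hs))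
    have hpred : ∀ j ∈ s.erase b, predI (insert a s) j = predI s j := fun j hj =>
      predI_insert_of_exists ha ⟨b, fmin_mem hs, hb j hj⟩
    rw [← mul_prod_erase s _ (fmin_mem hs), hpred_b, prod_congr rfl fun j hj => by rw [hpred j hj],
      ← ih, hsort]
    simp [b]

section CyclicPredecessor

variable (qp tp : F) (I : Finset ℕ) (z : ℕ → F)

/-- The entry preceding `z_j` in the cyclic order of `I`; wrapping around from `t_1` to `t_s`
costs a factor `qp⁻¹`. -/
def cycPrev (j : ℕ) : F := if fmin I < j then z (predI I j) else z (fmax I) / qp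

def cycFactor (j : ℕ) : F :=
  if j ∈ I then ahat tp (cycPrev qp I z j) (z j) else bhat tp (cycPrev qp I z j) (z j)

variable {qp tp I z} {i j : ℕ}

lemma cycPrev_of_lt (h : fmin I < j) : cycPrev qp I z j = z (predI I j) := if_pos h

lemma cycPrev_of_le (h : j ≤ fmin I) : cycPrev qp I z j = z (fmax I) / qp := if_neg h.not_gt

lemma Ipt_apply (hI : I.Nonempty) (j : ℕ) :
    Ipt qp I z j = if j ∈ I then cycPrev qp I z j else z j := by
  unfold Ipt
  by_cases hj : j = fmin I
  · rw [if_pos hj, if_pos (hj ▸ fmin_mem hI), cycPrev_of_le hj.le]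
  · rw [if_neg hj]
    split_ifs with h
    · rw [cycPrev_of_lt (lt_of_le_of_ne (fmin_le h) (Ne.symm hj))]
    · rfl

lemma AI_eq_prod (hI : I.Nonempty) : AI qp tp I z = ∏ j ∈ I, ahat tp (cycPrev qp I z j) (z j) := by
  rw [AI, prod_zip_sort_tail (fun a b => ahat tp (z a) (z b)), ← mul_prod_erase I _ (fmin_mem hI),
    cycPrev_of_le le_rfl]
  congr 1
  refine prod_congr rfl fun j hj => ?_
  rw [cycPrev_of_lt (lt_of_le_of_ne (fmin_le (mem_of_mem_erase hj)) (ne_of_mem_erase hj).symm)]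

lemma BI_eq_prod (n : ℕ) (hI : I.Nonempty) :
    BI qp tp n I z = (z (fmax I) - tp ^ (1 - (n : ℤ))) *
      ∏ j ∈ (Icc 1 n).filter (· ∉ I), bhat tp (cycPrev qp I z j) (z j) := by
  have hlow : ((Icc 1 n).filter (· ∉ I)).filter (· < fmin I) = (Icc 1 n).filter (· < fmin I) := by
    ext j
    simp only [mem_filter]
    exact ⟨fun h => ⟨h.1.1, h.2⟩, fun h => ⟨⟨h.1, fun hj => (fmin_le hj).not_gt h.2⟩, h.2⟩⟩
  have hhigh : ((Icc 1 n).filter (· ∉ I)).filter (¬ · < fmin I) =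
      (Icc 1 n).filter (fun j => j ∉ I ∧ fmin I < j) := by
    ext j
    simp only [mem_filter, not_lt]
    refine ⟨fun h => ⟨h.1.1, h.1.2, lt_of_le_of_ne h.2 ?_⟩, fun h => ⟨⟨h.1, h.2.1⟩, h.2.2.le⟩⟩
    rintro rfl
    exact h.1.2 (fmin_mem hI)
  rw [BI, mul_assoc, ← prod_filter_mul_prod_filter_not ((Icc 1 n).filter (· ∉ I)) (· < fmin I),
    hlow, hhigh]
  congr 2 <;> refine prod_congr rfl fun j hj => ?_
  · rw [cycPrev_of_le (mem_filter.1 hj).2.le]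
  · rw [cycPrev_of_lt (mem_filter.1 hj).2.2]

lemma chiI_eq (hi : i ∈ I) : chiI qp tp I i z = (ahat tp (cycPrev qp I z i) (z i))⁻¹ := by
  unfold chiI
  split_ifs with h
  · rw [cycPrev_of_le h.le]
  · rw [cycPrev_of_lt (lt_of_le_of_ne (fmin_le hi) (Ne.symm h))]

lemma rI_eq_prod_cycFactor {n : ℕ} (hIn : I ⊆ Icc 1 n) (hi : i ∈ I)
    (hne : ahat tp (cycPrev qp I z i) (z i) ≠ 0) :
    rI qp tp n I i z =
      (z (fmax I) - tp ^ (1 - (n : ℤ))) * ∏ j ∈ (Icc 1 n).erase i, cycFactor qp tp I z j := by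
  have hI : I.Nonempty := ⟨i, hi⟩
  have hsplit : ∏ j ∈ Icc 1 n, cycFactor qp tp I z j =
      (∏ j ∈ I, ahat tp (cycPrev qp I z j) (z j)) *
        ∏ j ∈ (Icc 1 n).filter (· ∉ I), bhat tp (cycPrev qp I z j) (z j) := by
    rw [← prod_filter_mul_prod_filter_not (Icc 1 n) (· ∈ I), filter_mem_eq_inter,
      inter_eq_right.2 hIn]
    congr 1 <;> refine prod_congr rfl fun j hj => ?_
    · rw [cycFactor, if_pos hj]
    · rw [cycFactor, if_neg (mem_filter.1 hj).2]
  rw [← mul_prod_erase _ _ (hIn hi), cycFactor, if_pos hi] at hsplit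
  rw [rI, chiI_eq hi, AI_eq_prod hI, BI_eq_prod n hI]
  field_simp
  linear_combination (tp ^ (1 - (n : ℤ)) - z (fmax I)) * hsplit

lemma ahat_cycPrev_ne_zero {n : ℕ} (hqp : qp ≠ 0) (htp : tp ≠ 1) (hIn : I ⊆ Icc 1 n) (hi : i ∈ I)
    (hz1 : ∀ a ∈ Icc 1 n, ∀ b ∈ Icc 1 n, a ≠ b → z a ≠ z b)
    (hz2 : ∀ a ∈ Icc 1 n, ∀ b ∈ Icc 1 n, z a ≠ qp * z b) :
    ahat tp (cycPrev qp I z i) (z i) ≠ 0 := by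
  have hz0 : ∀ a ∈ Icc 1 n, z a ≠ 0 := fun a ha h => hz2 a ha a ha (by rw [h, mul_zero])
  suffices cycPrev qp I z i ≠ 0 ∧ cycPrev qp I z i ≠ z i from
    div_ne_zero (mul_ne_zero (sub_ne_zero.2 htp) this.1) (sub_ne_zero.2 this.2)
  by_cases h : fmin I < i
  · obtain ⟨hp, hpi⟩ := predI_mem ⟨fmin I, fmin_mem ⟨i, hi⟩, h⟩
    rw [cycPrev_of_lt h]
    exact ⟨hz0 _ (hIn hp), hz1 _ (hIn hp) _ (hIn hi) hpi.ne⟩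
  · have hmax := hIn (fmax_mem ⟨i, hi⟩)
    rw [cycPrev_of_le (not_lt.1 h)]
    refine ⟨div_ne_zero (hz0 _ hmax) hqp, fun h => hz2 _ hmax _ (hIn hi) ?_⟩
    rw [← h, mul_div_cancel₀ _ hqp]

end CyclicPredecessor

section OuterInner

/-- For the summand indexed by `I`, the factors `H_j` of `H_i ⋯ H_{n-1}` (resp. `H_1 ⋯ H_{i-1}`)
in which the identity term is chosen. -/
def outerSet (n i : ℕ) (I : Finset ℕ) : Finset ℕ := (Icc i (n - 1)).filter (· + 1 ∈ I)

def innerSet (i : ℕ) (I : Finset ℕ) : Finset ℕ := (Icc 1 (i - 1)).filter (· ∈ I)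

variable {n i j : ℕ} {I : Finset ℕ} {qp : F} {z : ℕ → F}

lemma mem_outerSet {x : ℕ} : x ∈ outerSet n i I ↔ i ≤ x ∧ x ≤ n - 1 ∧ x + 1 ∈ I := by
  simp [outerSet, and_assoc]

lemma mem_innerSet {x : ℕ} : x ∈ innerSet i I ↔ 1 ≤ x ∧ x ≤ i - 1 ∧ x ∈ I := by
  simp [innerSet, and_assoc]

lemma hCarry_outerSet (hIn : I ⊆ Icc 1 n) (hi : i ∈ I) (hj : i ≤ j) :
    hCarry i (outerSet n i I) z j = z (predI I (j + 1)) := by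
  have hpred_mem : ∀ x ∈ I, i < x → x - 1 ∈ outerSet n i I := fun x hx hix => by
    have := mem_Icc.1 (hIn hx)
    exact mem_outerSet.2 ⟨by omega, by omega, by rwa [Nat.sub_add_cancel (by omega)]⟩
  rw [hCarry]
  split_ifs with h
  · obtain ⟨hp, hpj⟩ := predI_mem h
    rw [mem_outerSet] at hp
    refine congrArg z (predI_eq_of hp.2.2 (by omega) fun x hx hxj => ?_).symm
    by_cases hxi : x ≤ i
    · omega
    · have := le_predI (hpred_mem x hx (by omega)) (by omega : x - 1 < j)
      omega
  · push Not at h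
    refine congrArg z (predI_eq_of hi (by omega) fun x hx hxj => ?_).symm
    by_contra hxi
    have := h (x - 1) (hpred_mem x hx (by omega))
    omega

lemma hPoint_outerSet_of_lt (hj : j < i) : hPoint i (n - 1) (outerSet n i I) z j = z j :=
  if_neg (by omega)

lemma hPoint_outerSet_of_gt (hIn : I ⊆ Icc 1 n) (hi : i ∈ I) (hj : n < j) :
    hPoint i (n - 1) (outerSet n i I) z j = z j :=
  if_neg (by have := mem_Icc.1 (hIn hi); omega)

lemma hPoint_outerSet_self (hIn : I ⊆ Icc 1 n) (hi : i ∈ I) :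
    hPoint i (n - 1) (outerSet n i I) z n = z (fmax I) := by
  have hin := mem_Icc.1 (hIn hi)
  rw [hPoint, if_pos ⟨hin.2, by omega⟩, if_pos (Or.inr (by omega)),
    hCarry_outerSet hIn hi hin.2]
  refine congrArg z (predI_eq_of (fmax_mem ⟨i, hi⟩) ?_ fun x hx _ => le_fmax hx)
  have := mem_Icc.1 (hIn (fmax_mem ⟨i, hi⟩))
  omega

lemma hPoint_outerSet_of_mem_Ico (hIn : I ⊆ Icc 1 n) (hi : i ∈ I) (hij : i ≤ j) (hjn : j < n) :
    hPoint i (n - 1) (outerSet n i I) z j = Ipt qp I z (j + 1) := by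
  rw [hPoint, if_pos ⟨hij, by omega⟩, Ipt_apply ⟨i, hi⟩]
  have hmem : j ∈ outerSet n i I ∨ j = n - 1 + 1 ↔ j + 1 ∈ I := by
    rw [mem_outerSet]
    exact ⟨fun h => h.elim (·.2.2) (fun h => by omega), fun h => Or.inl ⟨hij, by omega, h⟩⟩
  by_cases hj : j + 1 ∈ I
  · rw [if_pos (hmem.2 hj), if_pos hj, hCarry_outerSet hIn hi hij,
      cycPrev_of_lt (by have := fmin_le hi; omega)]
  · rw [if_neg (mt hmem.1 hj), if_neg hj]

lemma hCoeff_outerSet (tp : F) (hIn : I ⊆ Icc 1 n) (hi : i ∈ I) :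
    hCoeff tp i (n - 1) (outerSet n i I) z = ∏ j ∈ Icc (i + 1) n, cycFactor qp tp I z j := by
  have hin := mem_Icc.1 (hIn hi)
  have hshift : Icc (i + 1) n = (Icc i (n - 1)).map (addRightEmbedding 1) := by
    rw [map_add_right_Icc, Nat.sub_add_cancel (by omega)]
  rw [hshift, prod_map, hCoeff]
  refine prod_congr rfl fun j hj => ?_
  have hj := mem_Icc.1 hj
  have hmem : j ∈ outerSet n i I ↔ j + 1 ∈ I := by
    rw [mem_outerSet]; exact ⟨(·.2.2), fun h => ⟨hj.1, hj.2, h⟩⟩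
  simp only [addRightEmbedding_apply, cycFactor, hmem, hCarry_outerSet hIn hi hj.1,
    cycPrev_of_lt (by have := fmin_le hi; omega : fmin I < j + 1)]

lemma deltaPt_outerSet_one (hIn : I ⊆ Icc 1 n) (hi : i ∈ I) :
    deltaPt qp n (hPoint i (n - 1) (outerSet n i I) z) 1 = z (fmax I) / qp := by
  rw [deltaPt, if_pos rfl, hPoint_outerSet_self hIn hi]

lemma deltaPt_outerSet_succ (hIn : I ⊆ Icc 1 n) (hi : i ∈ I) (h1 : 1 ≤ j) (hj : j < i) :
    deltaPt qp n (hPoint i (n - 1) (outerSet n i I) z) (j + 1) = z j := by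
  have := mem_Icc.1 (hIn hi)
  rw [deltaPt, if_neg (by omega), if_pos (by omega), Nat.add_sub_cancel, hPoint_outerSet_of_lt hj]

lemma deltaPt_outerSet_of_gt (hIn : I ⊆ Icc 1 n) (hi : i ∈ I) (hj : i < j) :
    deltaPt qp n (hPoint i (n - 1) (outerSet n i I) z) j = Ipt qp I z j := by
  have := mem_Icc.1 (hIn hi)
  rw [deltaPt, if_neg (by omega)]
  split_ifs with hjn
  · rw [hPoint_outerSet_of_mem_Ico hIn hi (by omega) (by omega), Nat.sub_add_cancel (by omega)]
  · rw [hPoint_outerSet_of_gt hIn hi (by omega), Ipt_apply ⟨i, hi⟩,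
      if_neg fun h => by have := mem_Icc.1 (hIn h); omega]

lemma deltaPt_outerSet_zero (hIn : I ⊆ Icc 1 n) (hi : i ∈ I) :
    deltaPt qp n (hPoint i (n - 1) (outerSet n i I) z) 0 = z 0 := by
  have := mem_Icc.1 (hIn hi)
  rw [deltaPt, if_neg (by omega), if_pos (by omega), hPoint_outerSet_of_lt (by omega)]

lemma predI_innerSet (hIn : I ⊆ Icc 1 n) (hj : j ≤ i) : predI (innerSet i I) j = predI I j := by
  unfold predI
  congr 1
  ext x
  simp only [mem_filter, mem_innerSet]
  exact ⟨fun h => ⟨h.1.2.2, h.2⟩, fun h => ⟨⟨(mem_Icc.1 (hIn h.1)).1, by omega, h.1⟩, h.2⟩⟩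

lemma hCarry_innerSet (hIn : I ⊆ Icc 1 n) (hi : i ∈ I) (h1 : 1 ≤ j) (hj : j ≤ i) :
    hCarry 1 (innerSet i I) (deltaPt qp n (hPoint i (n - 1) (outerSet n i I) z)) j =
      cycPrev qp I z j := by
  have hex : (∃ x ∈ innerSet i I, x < j) ↔ fmin I < j := by
    refine ⟨fun ⟨x, hx, hxj⟩ => by have := fmin_le (mem_innerSet.1 hx).2.2; omega,
      fun h => ⟨fmin I, mem_innerSet.2 ⟨?_, by omega, fmin_mem ⟨i, hi⟩⟩, h⟩⟩
    exact (mem_Icc.1 (hIn (fmin_mem ⟨i, hi⟩))).1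
  rw [hCarry, cycPrev]
  simp only [hex, predI_innerSet hIn hj]
  split_ifs with h
  · obtain ⟨hp, hpj⟩ := predI_mem ⟨fmin I, fmin_mem ⟨i, hi⟩, h⟩
    exact deltaPt_outerSet_succ hIn hi (mem_Icc.1 (hIn hp)).1 (by omega)
  · exact deltaPt_outerSet_one hIn hi

lemma hPoint_innerSet (hIn : I ⊆ Icc 1 n) (hi : i ∈ I) :
    hPoint 1 (i - 1) (innerSet i I) (deltaPt qp n (hPoint i (n - 1) (outerSet n i I) z)) =
      Ipt qp I z := by
  have hi1 := (mem_Icc.1 (hIn hi)).1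
  funext j
  rcases Nat.lt_or_ge i j with hij | hji
  · rw [hPoint, if_neg (by omega), deltaPt_outerSet_of_gt hIn hi hij]
  rcases Nat.eq_zero_or_pos j with rfl | hj1
  · rw [hPoint, if_neg (by omega), deltaPt_outerSet_zero hIn hi, Ipt_apply ⟨i, hi⟩,
      if_neg fun h => by have := (mem_Icc.1 (hIn h)).1; omega]
  have hmem : j ∈ innerSet i I ∨ j = i - 1 + 1 ↔ j ∈ I := by
    rw [mem_innerSet, Nat.sub_add_cancel hi1]
    refine ⟨fun h => h.elim (·.2.2) (· ▸ hi), fun h => ?_⟩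
    rcases hji.lt_or_eq with hji | rfl
    · exact Or.inl ⟨hj1, by omega, h⟩
    · exact Or.inr rfl
  rw [hPoint, if_pos ⟨hj1, by omega⟩, Ipt_apply ⟨i, hi⟩]
  by_cases hjI : j ∈ I
  · rw [if_pos (hmem.2 hjI), if_pos hjI, hCarry_innerSet hIn hi hj1 hji]
  · rw [if_neg (mt hmem.1 hjI), if_neg hjI,
      deltaPt_outerSet_succ hIn hi hj1 (lt_of_le_of_ne hji fun h => hjI (h ▸ hi))]

lemma hCoeff_innerSet (tp : F) (hIn : I ⊆ Icc 1 n) (hi : i ∈ I) :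
    hCoeff tp 1 (i - 1) (innerSet i I) (deltaPt qp n (hPoint i (n - 1) (outerSet n i I) z)) =
      ∏ j ∈ Icc 1 (i - 1), cycFactor qp tp I z j := by
  refine prod_congr rfl fun j hj => ?_
  have hj := mem_Icc.1 hj
  have hmem : j ∈ innerSet i I ↔ j ∈ I := by
    rw [mem_innerSet]; exact ⟨(·.2.2), fun h => ⟨hj.1, hj.2, h⟩⟩
  simp only [cycFactor, hmem, hCarry_innerSet hIn hi hj.1 (by omega),
    deltaPt_outerSet_succ hIn hi hj.1 (by omega)]

end OuterInner

lemma q_ne_zero : q ≠ 0 :=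
  (map_ne_zero_iff _ (IsFractionRing.injective (MvPolynomial (Fin 2) ℚ) F)).2
    (MvPolynomial.X_ne_zero 0)

lemma t_ne_one : t ≠ 1 := by
  intro h
  have := congrArg (MvPolynomial.eval (fun _ => (0 : ℚ)))
    (IsFractionRing.injective (MvPolynomial (Fin 2) ℚ) F (h.trans (map_one _).symm))
  simp at this

section JoinSets

def joinSets (i : ℕ) (L K : Finset ℕ) : Finset ℕ := insert i (K ∪ L.image (· + 1))

variable {n i : ℕ} {I L K : Finset ℕ}

lemma joinSets_subset (hi : i ∈ Icc 1 n) (hL : L ⊆ Icc i (n - 1)) (hK : K ⊆ Icc 1 (i - 1)) :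
    joinSets i L K ⊆ Icc 1 n := by
  have hi := mem_Icc.1 hi
  intro x hx
  simp only [joinSets, mem_insert, mem_union, mem_image] at hx
  rcases hx with rfl | hx | ⟨y, hy, rfl⟩
  · exact mem_Icc.2 hi
  · have := mem_Icc.1 (hK hx); exact mem_Icc.2 ⟨by omega, by omega⟩
  · have := mem_Icc.1 (hL hy); exact mem_Icc.2 ⟨by omega, by omega⟩

lemma joinSets_outerSet_innerSet (hIn : I ⊆ Icc 1 n) (hi : i ∈ I) :
    joinSets i (outerSet n i I) (innerSet i I) = I := by
  ext x
  simp only [joinSets, mem_insert, mem_union, mem_image, mem_outerSet, mem_innerSet]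
  constructor
  · rintro (rfl | h | ⟨y, h, rfl⟩)
    exacts [hi, h.2.2, h.2.2]
  · intro hx
    have := mem_Icc.1 (hIn hx)
    rcases lt_trichotomy x i with h | rfl | h
    · exact Or.inr (Or.inl ⟨by omega, by omega, hx⟩)
    · exact Or.inl rfl
    · exact Or.inr (Or.inr ⟨x - 1, ⟨by omega, by omega, by rwa [Nat.sub_add_cancel (by omega)]⟩,
        by omega⟩)

lemma outerSet_joinSets (hL : L ⊆ Icc i (n - 1)) (hK : K ⊆ Icc 1 (i - 1)) :
    outerSet n i (joinSets i L K) = L := by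
  ext x
  simp only [joinSets, mem_outerSet, mem_insert, mem_union, mem_image, add_left_inj,
    exists_eq_right]
  constructor
  · rintro ⟨h1, h2, h | h | h⟩
    · omega
    · have := mem_Icc.1 (hK h); omega
    · exact h
  · intro h
    have := mem_Icc.1 (hL h)
    exact ⟨by omega, by omega, Or.inr (Or.inr h)⟩

lemma innerSet_joinSets (hL : L ⊆ Icc i (n - 1)) (hK : K ⊆ Icc 1 (i - 1)) :
    innerSet i (joinSets i L K) = K := by
  ext x
  simp only [joinSets, mem_innerSet, mem_insert, mem_union, mem_image]
  constructor
  · rintro ⟨h1, h2, h | h | ⟨y, hy, rfl⟩⟩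
    · omega
    · exact h
    · have := mem_Icc.1 (hL hy); omega
  · intro h
    have := mem_Icc.1 (hK h)
    exact ⟨by omega, by omega, Or.inr (Or.inl h)⟩

lemma sum_filter_mem_eq_sum_outerSet_innerSet {M : Type*} [AddCommMonoid M]
    (hi : i ∈ Icc 1 n) (g : Finset ℕ → Finset ℕ → M) :
    ∑ I ∈ (Icc 1 n).powerset.filter (i ∈ ·), g (outerSet n i I) (innerSet i I) =
      ∑ L ∈ (Icc i (n - 1)).powerset, ∑ K ∈ (Icc 1 (i - 1)).powerset, g L K := by
  rw [← sum_product']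
  refine sum_nbij' (fun I => (outerSet n i I, innerSet i I)) (fun p => joinSets i p.1 p.2)
    ?_ ?_ ?_ ?_ fun _ _ => rfl
  · intro I _
    simp only [mem_product, mem_powerset]
    exact ⟨filter_subset _ _, filter_subset _ _⟩
  · rintro ⟨L, K⟩ hLK
    rw [mem_product, mem_powerset, mem_powerset] at hLK
    exact mem_filter.2 ⟨mem_powerset.2 (joinSets_subset hi hLK.1 hLK.2), mem_insert_self _ _⟩
  · intro I hI
    rw [mem_filter, mem_powerset] at hI
    exact joinSets_outerSet_innerSet hI.1 hI.2
  · rintro ⟨L, K⟩ hLK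
    rw [mem_product, mem_powerset, mem_powerset] at hLK
    exact Prod.ext (outerSet_joinSets hLK.1 hLK.2) (innerSet_joinSets hLK.1 hLK.2)

end JoinSets

lemma rI_mul_eq_expansion_term {qp tp : F} {n i : ℕ} {I : Finset ℕ} {z : ℕ → F} (f : (ℕ → F) → F)
    (hIn : I ⊆ Icc 1 n) (hi : i ∈ I) (hne : ahat tp (cycPrev qp I z i) (z i) ≠ 0) :
    rI qp tp n I i z * f (Ipt qp I z) =
      hCoeff tp i (n - 1) (outerSet n i I) z *
        ((hPoint i (n - 1) (outerSet n i I) z n - tp ^ (1 - (n : ℤ))) *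
          (hCoeff tp 1 (i - 1) (innerSet i I) (deltaPt qp n (hPoint i (n - 1) (outerSet n i I) z)) *
            f (hPoint 1 (i - 1) (innerSet i I)
              (deltaPt qp n (hPoint i (n - 1) (outerSet n i I) z))))) := by
  have := mem_Icc.1 (hIn hi)
  have hsplit : (Icc 1 n).erase i = Icc 1 (i - 1) ∪ Icc (i + 1) n := by
    ext x; simp only [mem_erase, mem_union, mem_Icc]; omega
  have hdisj : Disjoint (Icc 1 (i - 1)) (Icc (i + 1) n) :=
    disjoint_left.2 fun x h1 h2 => by simp only [mem_Icc] at h1 h2; omega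
  rw [rI_eq_prod_cycFactor hIn hi hne, hsplit, prod_union hdisj, hCoeff_outerSet tp hIn hi,
    hPoint_outerSet_self hIn hi, hCoeff_innerSet tp hIn hi, hPoint_innerSet hIn hi]
  ring

theorem Ztilde_expansion_general (n : ℕ) (i : ℕ) (hi : i ∈ Finset.Icc 1 n)
    (f : (ℕ → F) → F) (z : ℕ → F)
    (hz1 : ∀ a ∈ Finset.Icc 1 n, ∀ b ∈ Finset.Icc 1 n, a ≠ b → z a ≠ z b)
    (hz2 : ∀ a ∈ Finset.Icc 1 n, ∀ b ∈ Finset.Icc 1 n, z a ≠ q * z b) :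
    Ztilde q t n i f z =
      ∑ I ∈ (Finset.Icc 1 n).powerset.filter (fun I => i ∈ I),
        rI q t n I i z * f (Ipt q I z) := by
  rw [Ztilde, Hprod_eq_sum]
  simp only [PhiOp, Hprod_eq_sum, mul_sum]
  rw [← sum_filter_mem_eq_sum_outerSet_innerSet hi]
  refine sum_congr rfl fun I hI => ?_
  obtain ⟨hIn, hiI⟩ := mem_filter.1 hI
  exact (rI_mul_eq_expansion_term f (mem_powerset.1 hIn) hiI
    (ahat_cycPrev_ne_zero q_ne_zero t_ne_one (mem_powerset.1 hIn) hiI hz1 hz2)).symm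

/-- Lemma 2: the expansion of `Z̃_i = H_i ⋯ H_{n-1} Φ H_1 ⋯ H_{i-1}`
applied to an arbitrary (rational) function:
`Z̃_i f(z) = Σ_{I ⊆ {1,…,n}, i ∈ I} r_I^{(i)}(z) f(Iz)`,
stated at every point where all the rational operations involved are defined. -/
theorem Ztilde_expansion (n : ℕ) (hn : 2 ≤ n) (i : ℕ) (hi : i ∈ Finset.Icc 1 n)
    (f : (ℕ → F) → F) (z : ℕ → F)
    (hz1 : ∀ a ∈ Finset.Icc 1 n, ∀ b ∈ Finset.Icc 1 n, a ≠ b → z a ≠ z b)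
    (hz2 : ∀ a ∈ Finset.Icc 1 n, ∀ b ∈ Finset.Icc 1 n, z a ≠ q * z b) :
    Ztilde q t n i f z =
      ∑ I ∈ (Finset.Icc 1 n).powerset.filter (fun I => i ∈ I),
        rI q t n I i z * f (Ipt q I z) :=
  Ztilde_expansion_general n i hi f z hz1 hz2
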